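/- Let 𝔅 be a function from density matrices to nonnegative reals that is tensor-product additive (𝔅(ρ⊗σ) = 𝔅(ρ)+𝔅(σ)), superadditive (𝔅(τ) ≥ 𝔅(Tr_B τ) + 𝔅(Tr_A τ) for any bipartite state τ on AB), and monotone under a class 𝕆 of maps. Suppose for some rate r > 0 and every sufficiently large n there exist Λ_n ∈ 𝕆 mapping states on S^{⊗n} to states on S'^{⊗⌊rn⌋} with Tr_{\i} Λ_n(ρ^{⊗n}) = ρ' for every subsystem i. Then 𝔅(ρ) ≥ r·𝔅(ρ'). -/

import Mathlib

open Matrix ComplexOrder Kronecker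

/-- `ρ` is a density matrix. -/
def IsDensityMatrix {n : Type*} [Fintype n] (ρ : Matrix n n ℂ) : Prop :=
  ρ.PosSemidef ∧ ρ.trace = 1

/-- The `n`-fold tensor (Kronecker) power of a matrix, indexed by `Fin n → I`. -/
def tpow {I : Type*} [Fintype I] (A : Matrix I I ℂ) (n : ℕ) :
    Matrix (Fin n → I) (Fin n → I) ℂ :=
  Matrix.of fun f g => ∏ i, A (f i) (g i)

/-- The marginal on the `k`-th site of a state on `n` sites. -/
noncomputable def marginal {I : Type*} [Fintype I] [DecidableEq I] {n : ℕ}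
    (τ : Matrix (Fin n → I) (Fin n → I) ℂ) (k : Fin n) : Matrix I I ℂ :=
  Matrix.of fun a b =>
    ∑ f : Fin n → I, if f k = a then τ f (Function.update f k b) else 0

/-- Partial trace over the second factor of a bipartite matrix. -/
noncomputable def ptraceB {A B : Type*} [Fintype A] [Fintype B]
    (τ : Matrix (A × B) (A × B) ℂ) : Matrix A A ℂ :=
  Matrix.of fun i j => ∑ k : B, τ (i, k) (j, k)

/-- Partial trace over the first factor of a bipartite matrix. -/
noncomputable def ptraceA {A B : Type*} [Fintype A] [Fintype B]
    (τ : Matrix (A × B) (A × B) ℂ) : Matrix B B ℂ :=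
  Matrix.of fun i j => ∑ k : A, τ (k, i) (k, j)

/-! Applying the operation `Λₙ` to `ρ^{⊗n}` and then superadditivity over the `⌊rn⌋` exact
marginals gives `⌊rn⌋ 𝔅(ρ') ≤ 𝔅(Λₙ(ρ^{⊗n})) ≤ 𝔅(ρ^{⊗n}) = n 𝔅(ρ)`; dividing by `n` and
letting `n → ∞` yields `r 𝔅(ρ') ≤ 𝔅(ρ)`. -/

open Filter Topology

lemma tpow_posSemidef {I : Type*} [Fintype I] [DecidableEq I] {A : Matrix I I ℂ}
    (hA : A.PosSemidef) (n : ℕ) : (tpow A n).PosSemidef := by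
  obtain ⟨B, rfl⟩ : ∃ B : Matrix I I ℂ, A = Bᴴ * B := by
    open scoped MatrixOrder in exact CStarAlgebra.nonneg_iff_eq_star_mul_self.mp hA.nonneg
  have hfactor : tpow (Bᴴ * B) n = (tpow B n)ᴴ * tpow B n := by
    ext f g
    simp only [tpow, Matrix.of_apply, Matrix.mul_apply, Matrix.conjTranspose_apply]
    rw [Finset.prod_univ_sum]
    refine Finset.sum_congr rfl fun h _ => ?_
    simp [Finset.prod_mul_distrib, star_prod]
  rw [hfactor]
  exact posSemidef_conjTranspose_mul_self _

lemma trace_tpow {I : Type*} [Fintype I] (A : Matrix I I ℂ) (n : ℕ) :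
    (tpow A n).trace = A.trace ^ n := by
  simp only [Matrix.trace, Matrix.diag, tpow, Matrix.of_apply]
  rw [← Fintype.prod_sum (fun (_ : Fin n) (k : I) => A k k)]
  simp

lemma IsDensityMatrix.tpow {I : Type*} [Fintype I] [DecidableEq I] {A : Matrix I I ℂ}
    (hA : IsDensityMatrix A) (n : ℕ) : IsDensityMatrix (tpow A n) :=
  ⟨tpow_posSemidef hA.1 n, by rw [trace_tpow, hA.2, one_pow]⟩

lemma mul_le_of_eventually_floor_mul_le {r a b : ℝ} (hr : 0 ≤ r)
    (h : ∀ᶠ n : ℕ in atTop, (⌊r * n⌋₊ : ℝ) * a ≤ n * b) : r * a ≤ b := by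
  have hlim : Tendsto (fun n : ℕ => (⌊r * n⌋₊ : ℝ) / n * a) atTop (𝓝 (r * a)) :=
    ((tendsto_nat_floor_mul_div_atTop hr).comp tendsto_natCast_atTop_atTop).mul_const a
  refine le_of_tendsto hlim ?_
  filter_upwards [h, eventually_gt_atTop 0] with n hn hpos
  rw [div_mul_eq_mul_div, div_le_iff₀ (by positivity)]
  linarith

section ResourceMeasure

variable (𝔅 : ∀ {I : Type} [Fintype I] [DecidableEq I], Matrix I I ℂ → ℝ)

lemma card_mul_le_of_marginal_eq
    (hsuperMulti : ∀ (I : Type) [Fintype I] [DecidableEq I] (n : ℕ)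
      (τ : Matrix (Fin n → I) (Fin n → I) ℂ), IsDensityMatrix τ →
      ∑ i : Fin n, 𝔅 (marginal τ i) ≤ 𝔅 τ)
    {I : Type} [Fintype I] [DecidableEq I] {m : ℕ} {τ : Matrix (Fin m → I) (Fin m → I) ℂ}
    (hτ : IsDensityMatrix τ) {σ : Matrix I I ℂ} (hmarg : ∀ i, marginal τ i = σ) :
    (m : ℝ) * 𝔅 σ ≤ 𝔅 τ := by
  simpa [hmarg] using hsuperMulti I m τ hτ

lemma card_mul_le_mul_of_map_tpow
    (haddpow : ∀ (I : Type) [Fintype I] [DecidableEq I] (σ : Matrix I I ℂ) (n : ℕ),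
      IsDensityMatrix σ → 𝔅 (tpow σ n) = (n : ℝ) * 𝔅 σ)
    (hsuperMulti : ∀ (I : Type) [Fintype I] [DecidableEq I] (n : ℕ)
      (τ : Matrix (Fin n → I) (Fin n → I) ℂ), IsDensityMatrix τ →
      ∑ i : Fin n, 𝔅 (marginal τ i) ≤ 𝔅 τ)
    {I J : Type} [Fintype I] [DecidableEq I] [Fintype J] [DecidableEq J]
    {ρ : Matrix I I ℂ} {ρ' : Matrix J J ℂ} (hρ : IsDensityMatrix ρ) {n m : ℕ}
    (Λ : Matrix (Fin n → I) (Fin n → I) ℂ → Matrix (Fin m → J) (Fin m → J) ℂ)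
    (hΛ : ∀ σ, IsDensityMatrix σ → IsDensityMatrix (Λ σ) ∧ 𝔅 (Λ σ) ≤ 𝔅 σ)
    (hmarg : ∀ i, marginal (Λ (tpow ρ n)) i = ρ') :
    (m : ℝ) * 𝔅 ρ' ≤ n * 𝔅 ρ := by
  obtain ⟨hΛρ, hmono⟩ := hΛ _ (hρ.tpow n)
  calc (m : ℝ) * 𝔅 ρ' ≤ 𝔅 (Λ (tpow ρ n)) := card_mul_le_of_marginal_eq 𝔅 hsuperMulti hΛρ hmarg
    _ ≤ 𝔅 (tpow ρ n) := hmono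
    _ = n * 𝔅 ρ := haddpow I ρ n hρ

end ResourceMeasure

theorem measure_bound_asymptotic_exact_marginal_general
    (𝔅 : ∀ {I : Type} [Fintype I] [DecidableEq I], Matrix I I ℂ → ℝ)
    (haddpow : ∀ (I : Type) [Fintype I] [DecidableEq I] (σ : Matrix I I ℂ) (n : ℕ),
      IsDensityMatrix σ → 𝔅 (tpow σ n) = (n : ℝ) * 𝔅 σ)
    (hsuperMulti : ∀ (I : Type) [Fintype I] [DecidableEq I] (n : ℕ)
      (τ : Matrix (Fin n → I) (Fin n → I) ℂ), IsDensityMatrix τ →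
      ∑ i : Fin n, 𝔅 (marginal τ i) ≤ 𝔅 τ)
    (dS dS' : ℕ) (ρ : Matrix (Fin dS) (Fin dS) ℂ) (ρ' : Matrix (Fin dS') (Fin dS') ℂ)
    (hρ : IsDensityMatrix ρ)
    (r : ℝ) (hr : 0 < r)
    (hmaps : ∃ N : ℕ, ∀ n ≥ N,
      ∃ Λ : Matrix (Fin n → Fin dS) (Fin n → Fin dS) ℂ →
        Matrix (Fin ⌊r * n⌋₊ → Fin dS') (Fin ⌊r * n⌋₊ → Fin dS') ℂ,
        (∀ σ, IsDensityMatrix σ → IsDensityMatrix (Λ σ) ∧ 𝔅 (Λ σ) ≤ 𝔅 σ) ∧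
        (∀ i : Fin ⌊r * n⌋₊, marginal (Λ (tpow ρ n)) i = ρ')) :
    r * 𝔅 ρ' ≤ 𝔅 ρ := by
  obtain ⟨N, hN⟩ := hmaps
  refine mul_le_of_eventually_floor_mul_le hr.le (eventually_atTop.2 ⟨N, fun n hn => ?_⟩)
  obtain ⟨Λ, hΛ, hmarg⟩ := hN n hn
  exact card_mul_le_mul_of_map_tpow 𝔅 haddpow hsuperMulti hρ Λ hΛ hmarg

/-- A tensor-product additive, superadditive resource measure `𝔅`, monotone under the
operations implementing an asymptotic exact marginal transformation from `ρ` to `ρ'` at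
rate `r`, satisfies `𝔅(ρ) ≥ r·𝔅(ρ')`. -/
theorem measure_bound_asymptotic_exact_marginal
    (𝔅 : ∀ {I : Type} [Fintype I] [DecidableEq I], Matrix I I ℂ → ℝ)
    (hnonneg : ∀ (I : Type) [Fintype I] [DecidableEq I] (σ : Matrix I I ℂ),
      IsDensityMatrix σ → 0 ≤ 𝔅 σ)
    (haddkron : ∀ (A B : Type) [Fintype A] [DecidableEq A] [Fintype B] [DecidableEq B]
      (σ₁ : Matrix A A ℂ) (σ₂ : Matrix B B ℂ), IsDensityMatrix σ₁ → IsDensityMatrix σ₂ →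
      𝔅 (σ₁ ⊗ₖ σ₂) = 𝔅 σ₁ + 𝔅 σ₂)
    (haddpow : ∀ (I : Type) [Fintype I] [DecidableEq I] (σ : Matrix I I ℂ) (n : ℕ),
      IsDensityMatrix σ → 𝔅 (tpow σ n) = (n : ℝ) * 𝔅 σ)
    (hsuper : ∀ (A B : Type) [Fintype A] [DecidableEq A] [Fintype B] [DecidableEq B]
      (τ : Matrix (A × B) (A × B) ℂ), IsDensityMatrix τ →
      𝔅 (ptraceB τ) + 𝔅 (ptraceA τ) ≤ 𝔅 τ)
    (hsuperMulti : ∀ (I : Type) [Fintype I] [DecidableEq I] (n : ℕ)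
      (τ : Matrix (Fin n → I) (Fin n → I) ℂ), IsDensityMatrix τ →
      ∑ i : Fin n, 𝔅 (marginal τ i) ≤ 𝔅 τ)
    (dS dS' : ℕ) (ρ : Matrix (Fin dS) (Fin dS) ℂ) (ρ' : Matrix (Fin dS') (Fin dS') ℂ)
    (hρ : IsDensityMatrix ρ) (hρ' : IsDensityMatrix ρ')
    (r : ℝ) (hr : 0 < r)
    (hmaps : ∃ N : ℕ, ∀ n ≥ N,
      ∃ Λ : Matrix (Fin n → Fin dS) (Fin n → Fin dS) ℂ →
        Matrix (Fin ⌊r * n⌋₊ → Fin dS') (Fin ⌊r * n⌋₊ → Fin dS') ℂ,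
        (∀ σ, IsDensityMatrix σ → IsDensityMatrix (Λ σ) ∧ 𝔅 (Λ σ) ≤ 𝔅 σ) ∧
        (∀ i : Fin ⌊r * n⌋₊, marginal (Λ (tpow ρ n)) i = ρ')) :
    r * 𝔅 ρ' ≤ 𝔅 ρ :=
  measure_bound_asymptotic_exact_marginal_general 𝔅 haddpow hsuperMulti dS dS' ρ ρ' hρ r hr hmaps
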